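/- Let t be the Thue–Morse word (fixed point of h: 0↦01, 1↦10 starting with 0), let f be a non-erasing binary morphism with f(0)=0, and let w = f(t). Then every factor u of w is a factor of f(v) for some factor v of t with |v| ≤ (2/(|f(1)|+1))·(|u| + 3|f(1)| − 3). -/

import Mathlib

/-!
Any factor `u` of `f(t)` is covered by `f(v)` for a factor `v` of `t` chosen minimal: dropping a
letter at either end of `v` would uncover part of `u`, so `f(v)` overhangs `u` by less than
`|f(1)|` on each side. Since `t` is a concatenation of the blocks `01` and `10`, every factor
`v` of `t` satisfies `|v|₀ ≤ |v|₁ + 2`; with `|f(v)| = |v|₀ + |f(1)| |v|₁` this turns the bound on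
`|f(v)|` into the bound on `|v|`.
-/

def IsFactor {α : Type*} (u : List α) (w : ℕ → α) : Prop :=
  ∃ i, u = (List.range u.length).map fun j => w (i + j)

/-- The Thue–Morse word: `tm n` is the parity of the binary digit sum of `n`. -/
def tm : ℕ → Fin 2 := fun n => if (Nat.digits 2 n).sum % 2 = 0 then 0 else 1

def tmPrefix (n : ℕ) : List (Fin 2) := (List.range n).map tm

namespace List

variable {α β : Type*} {f : α → List β} {k : ℕ} {u : List β}

theorem exists_suffix_flatMap_eq_append_of_length_le (hk : ∀ a, (f a).length ≤ k) (hu : u ≠ [])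
    {w : List α} {s t : List β} (h : w.flatMap f = s ++ u ++ t) :
    ∃ v s', v <:+ w ∧ v.flatMap f = s' ++ u ++ t ∧ s'.length < k := by
  induction w generalizing s with
  | nil =>
    simp only [flatMap_nil, nil_eq, append_eq_nil_iff] at h
    exact absurd h.1.2 hu
  | cons a w ih =>
    by_cases hs : (f a).length ≤ s.length
    · have hsplit : f a ++ w.flatMap f = s.take (f a).length ++ (s.drop (f a).length ++ u ++ t) := by
        rw [← flatMap_cons, h, ← append_assoc, ← append_assoc, take_append_drop]
      obtain ⟨-, hw⟩ := append_inj hsplit (by simp [hs])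
      obtain ⟨v, s', hvw, hv, hs'⟩ := ih hw
      exact ⟨v, s', hvw.trans (suffix_cons a w), hv, hs'⟩
    · exact ⟨a :: w, s, suffix_refl _, h, (not_le.mp hs).trans_le (hk a)⟩

theorem exists_prefix_flatMap_eq_append_of_length_le (hk : ∀ a, (f a).length ≤ k) (hu : u ≠ [])
    {w : List α} {s t : List β} (h : w.flatMap f = s ++ u ++ t) :
    ∃ v t', v <+: w ∧ v.flatMap f = s ++ u ++ t' ∧ t'.length < k := by
  have hrev : w.reverse.flatMap (reverse ∘ f) = t.reverse ++ u.reverse ++ s.reverse := by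
    simp [← reverse_flatMap, h]
  obtain ⟨v, t', hvw, hv, ht'⟩ := exists_suffix_flatMap_eq_append_of_length_le (f := reverse ∘ f)
    (by simpa using hk) (by simpa using hu) hrev
  refine ⟨v.reverse, t'.reverse, reverse_suffix.mp (by simpa using hvw), ?_, by simpa using ht'⟩
  simpa [flatMap_reverse] using congrArg reverse hv

theorem exists_infix_flatMap_length_le (hk : ∀ a, (f a).length ≤ k) (hu : u ≠ [])
    {w : List α} (h : u <:+: w.flatMap f) :
    ∃ v, v <:+: w ∧ u <:+: v.flatMap f ∧ (v.flatMap f).length + 2 ≤ u.length + 2 * k := by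
  obtain ⟨s, t, h⟩ := h
  obtain ⟨v₁, s', hv₁w, hv₁, hs'⟩ := exists_suffix_flatMap_eq_append_of_length_le hk hu h.symm
  obtain ⟨v, t', hvv₁, hv, ht'⟩ := exists_prefix_flatMap_eq_append_of_length_le hk hu hv₁
  refine ⟨v, hvv₁.isInfix.trans hv₁w.isInfix, ⟨s', t', hv.symm⟩, ?_⟩
  rw [hv, length_append, length_append]
  omega

theorem length_flatMap_fin_two (f : Fin 2 → List β) (v : List (Fin 2)) :
    (v.flatMap f).length = v.count 0 * (f 0).length + v.count 1 * (f 1).length := by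
  induction v with
  | nil => simp
  | cons a v ih => fin_cases a <;> simp [ih] <;> ring

theorem count_zero_add_count_one (v : List (Fin 2)) : v.count 0 + v.count 1 = v.length := by
  induction v with
  | nil => simp
  | cons a v ih => fin_cases a <;> simp <;> omega

theorem length_mul_add_two_le_of_length_le_two_mul_count_one {f : Fin 2 → List β}
    (hf0 : (f 0).length = 1) (hf1 : f 1 ≠ []) {v : List (Fin 2)}
    (hv : v.length ≤ 2 * v.count 1 + 2) :
    v.length * ((f 1).length + 1) + 2 ≤ 2 * (v.flatMap f).length + 2 * (f 1).length := by
  have hk : 1 ≤ (f 1).length := length_pos_iff.mpr hf1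
  rw [length_flatMap_fin_two, hf0, ← count_zero_add_count_one v] at *
  nlinarith

end List

theorem isFactor_iff_exists_range' {α : Type*} {u : List α} {w : ℕ → α} :
    IsFactor u w ↔ ∃ i, u = (List.range' i u.length).map w := by
  simp only [IsFactor, List.range'_eq_map_range, List.map_map]
  rfl

theorem IsFactor.of_infix_map_range {α : Type*} {v : List α} {w : ℕ → α} {n : ℕ}
    (h : v <:+: (List.range n).map w) : IsFactor v w := by
  obtain ⟨l, ⟨s, t, hl⟩, rfl⟩ := List.infix_map_iff.mp h
  rw [List.range_eq_range'] at hl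
  obtain ⟨m, -, hsl, -⟩ := List.range'_eq_append_iff.mp hl.symm
  obtain ⟨j, -, -, rfl⟩ := List.range'_eq_append_iff.mp hsl.symm
  exact isFactor_iff_exists_range'.mpr ⟨0 + j * 1, by simp⟩

section PairedLetter

variable {α : Type*} [DecidableEq α] {w : ℕ → α} {x : α}

theorem length_le_two_mul_count_map_range'_two_mul (hw : ∀ c, x = w (2 * c) ∨ x = w (2 * c + 1))
    (L c : ℕ) : L ≤ 2 * ((List.range' (2 * c) L).map w).count x + 1 := by
  induction L using Nat.twoStepInduction generalizing c with
  | zero => simp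
  | one => simp
  | more L ih =>
    have hpair : 1 ≤ [w (2 * c), w (2 * c + 1)].count x := by
      rcases hw c with h | h <;> simp [h]
    have hsplit : List.range' (2 * c) (L + 2) = [2 * c, 2 * c + 1] ++ List.range' (2 * (c + 1)) L := by
      simp only [List.range'_succ, List.cons_append, List.nil_append]; rfl
    have := ih (c + 1)
    rw [hsplit, List.map_append, List.count_append]
    simp only [List.map_cons, List.map_nil]
    omega

theorem IsFactor.length_le_two_mul_count_add_two (hw : ∀ c, x = w (2 * c) ∨ x = w (2 * c + 1))
    {v : List α} (hv : IsFactor v w) : v.length ≤ 2 * v.count x + 2 := by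
  obtain ⟨i, hi⟩ := isFactor_iff_exists_range'.mp hv
  obtain ⟨c, rfl | rfl⟩ : ∃ c, i = 2 * c ∨ i = 2 * c + 1 := ⟨i / 2, by omega⟩
  · have := length_le_two_mul_count_map_range'_two_mul hw v.length c
    rw [← hi] at this
    omega
  · rcases hL : v.length with _ | L
    · omega
    · have := length_le_two_mul_count_map_range'_two_mul hw L (c + 1)
      rw [hL, List.range'_succ, List.map_cons, show 2 * c + 1 + 1 = 2 * (c + 1) by ring] at hi
      rw [hi, List.count_cons]
      omega

end PairedLetter

theorem tm_two_mul (c : ℕ) : tm (2 * c) = tm c := by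
  rcases Nat.eq_zero_or_pos c with rfl | hc
  · rfl
  · unfold tm
    rw [← zero_add (2 * c), Nat.digits_add 2 one_lt_two 0 c two_pos (Or.inr hc.ne'), List.sum_cons,
      zero_add]

theorem tm_two_mul_add_one_ne (c : ℕ) : tm (2 * c + 1) ≠ tm c := by
  simp only [tm, add_comm (2 * c), Nat.digits_add 2 one_lt_two 1 c one_lt_two (Or.inl one_ne_zero),
    List.sum_cons]
  split_ifs <;> simp_all <;> omega

theorem eq_tm_two_mul_or_eq_tm_two_mul_add_one (x : Fin 2) (c : ℕ) :
    x = tm (2 * c) ∨ x = tm (2 * c + 1) := by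
  have := tm_two_mul_add_one_ne c
  rw [← tm_two_mul c] at this
  generalize tm (2 * c) = a, tm (2 * c + 1) = b at this ⊢
  revert x a b
  decide

/-- Bounding Lemma: if `f` is a non-erasing binary morphism with `f(0) = 0` and
`w = f(t)`, then every factor `u` of `w` is a factor of `f(v)` for some factor
`v` of `t` with `|v| ≤ (2/(|f(1)|+1))·(|u| + 3|f(1)| − 3)`. -/
theorem stmt12 (f : Fin 2 → List (Fin 2)) (hf0 : f 0 = [0]) (hf1 : f 1 ≠ [])
    (u : List (Fin 2)) (hu : ∃ n, u <:+: (tmPrefix n).flatMap f) :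
    ∃ v : List (Fin 2), IsFactor v tm ∧ u <:+: v.flatMap f ∧
      (v.length : ℚ) ≤ 2 / ((f 1).length + 1) *
        ((u.length : ℚ) + 3 * (f 1).length - 3) := by
  have hk : (1 : ℚ) ≤ (f 1).length := by exact_mod_cast List.length_pos_iff.mpr hf1
  rcases eq_or_ne u [] with rfl | hu₀
  · refine ⟨[], ⟨0, rfl⟩, List.infix_refl _, ?_⟩
    simpa using mul_nonneg (by positivity) (by linarith)
  obtain ⟨n, hn⟩ := hu
  have hfk (a : Fin 2) : (f a).length ≤ (f 1).length := by
    fin_cases a <;> simp [hf0, Nat.one_le_iff_ne_zero, hf1]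
  obtain ⟨v, hvn, huv, hvu⟩ := List.exists_infix_flatMap_length_le hfk hu₀ hn
  have hv : IsFactor v tm := .of_infix_map_range hvn
  have hvk := List.length_mul_add_two_le_of_length_le_two_mul_count_one (by simp [hf0]) hf1
    (hv.length_le_two_mul_count_add_two (eq_tm_two_mul_or_eq_tm_two_mul_add_one 1))
  refine ⟨v, hv, huv, ?_⟩
  rw [div_mul_eq_mul_div, le_div_iff₀ (by positivity)]
  have : (v.length : ℚ) * ((f 1).length + 1) + 6 ≤ 2 * u.length + 6 * (f 1).length := by
    exact_mod_cast (by omega : _ ≤ _)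
  linarith
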